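/- arXiv:2109.01131 — 2 statements merged into one kernel-verified Lean document; each statement's English description precedes it below -/
import Mathlib

section
/- Let F ⊆ ℕ⁺ be ∅-definable with some element of F different from 1. Then for every prime p there exist f₁, f₂ ∈ F such that the intersection of the set of prime divisors of f₁ with the set of prime divisors of f₂ is exactly {p}. In particular, p is the unique prime dividing both f₁ and f₂, so p is definable over {f₁, f₂}. -/
/-!
Definable sets are invariant under automorphisms of `(ℕ⁺, ·, 1)`, and by unique factorisation
every permutation of the primes induces one. Take `x ∈ F` with `x ≠ 1` and a prime `q ∣ x`.
Relabelling the primes by the swap `q ↔ p` gives `f₁ ∈ F` with `p ∣ f₁`; relabelling first by a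
permutation that fixes `q` and moves the other prime divisors of `x` away from them, then by the
same swap, gives `f₂ ∈ F` whose only prime divisor in common with `f₁` is `p`.
-/

open FirstOrder Language

/-- The language `L` with one binary function symbol `·` and one constant symbol `1`. -/
def L : FirstOrder.Language :=
  ⟨fun n => match n with | 0 => Unit | 2 => Unit | _ => Empty, fun _ => Empty⟩

/-- Any monoid is an `L`-structure, with `·` interpreted as multiplication and `1` as the
identity. In particular `ℕ+` is the standard model of Skolem arithmetic, and
`Multiplicative ℕ` is the additive `L`-structure `(ℕ, +, 0)`. -/
instance (M : Type*) [Monoid M] : L.Structure M where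
  funMap {n} f x :=
    match n, f, x with
    | 0, _, _ => 1
    | 2, _, x => x 0 * x 1
  RelMap r _ := r.elim

/-- The set of prime divisors of `a` (as positive naturals). -/
def sigma' (a : ℕ+) : Set ℕ+ := {p | (p : ℕ).Prime ∧ p ∣ a}

def MulEquiv.toLEquiv {M N : Type*} [Monoid M] [Monoid N] (g : M ≃* N) : M ≃[L] N where
  toEquiv := g.toEquiv
  map_fun' {n} f x := by
    match n, f with
    | 0, _ => exact map_one g
    | 2, _ => exact map_mul g (x 0) (x 1)
  map_rel' r := r.elim

theorem MulEquiv.realize_formula {M N α : Type*} [Monoid M] [Monoid N] (g : M ≃* N)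
    (φ : L.Formula α) (v : α → M) : φ.Realize (g ∘ v) ↔ φ.Realize v :=
  StrongHomClass.realize_formula g.toLEquiv φ

section Perm

variable {α : Type*} [Infinite α]

theorem exists_perm_extend_of_finite {s : Set α} (hs : s.Finite) (f : s ↪ α) :
    ∃ σ : Equiv.Perm α, ∀ x : s, σ x = f x :=
  Cardinal.extend_function_of_lt f (hs.lt_aleph0.trans_le (Cardinal.aleph0_le_mk α))
    ⟨Equiv.refl α⟩

theorem exists_perm_inter_image_eq_singleton {s : Set α} (hs : s.Finite) {q : α} (hq : q ∈ s) :
    ∃ τ : Equiv.Perm α, s ∩ τ '' s = {q} := by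
  classical
  have : Finite s := hs
  have : Infinite (sᶜ : Set α) := hs.infinite_compl.to_subtype
  obtain ⟨g⟩ : Nonempty (s ↪ (sᶜ : Set α)) := (Cardinal.le_def _ _).1
    ((Cardinal.lt_aleph0_of_finite s).le.trans (Cardinal.aleph0_le_mk _))
  set e : s ↪ α := g.trans (Function.Embedding.subtype _)
  have he : ∀ x, e x ∉ s := fun x => (g x).2
  -- away from `q` this agrees with `e`, since `e` never takes the value `q ∈ s`
  obtain ⟨τ, hτ⟩ := exists_perm_extend_of_finite hs (e.setValue ⟨q, hq⟩ q)
  have hτq : τ q = q := (hτ ⟨q, hq⟩).trans (Function.Embedding.setValue_eq ..)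
  refine ⟨τ, Set.eq_singleton_iff_unique_mem.2 ⟨⟨hq, q, hq, hτq⟩, ?_⟩⟩
  rintro _ ⟨hxs, x, hx, rfl⟩
  by_cases hxq : x = q
  · rw [hxq, hτq]
  · have hxq' : (⟨x, hx⟩ : s) ≠ ⟨q, hq⟩ := fun h => hxq (congrArg Subtype.val h)
    rw [hτ ⟨x, hx⟩, Function.Embedding.setValue_eq_of_ne hxq' fun h => he _ (h ▸ hq)] at hxs
    exact absurd hxs (he _)

theorem exists_perm_image_inter_image_eq_singleton {s : Set α} (hs : s.Finite) {q : α}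
    (hq : q ∈ s) (p : α) : ∃ σ₁ σ₂ : Equiv.Perm α, σ₁ '' s ∩ σ₂ '' s = {p} := by
  classical
  obtain ⟨τ, hτ⟩ := exists_perm_inter_image_eq_singleton hs hq
  refine ⟨Equiv.swap q p, Equiv.swap q p * τ, ?_⟩
  rw [Equiv.Perm.coe_mul, Set.image_comp, ← Set.image_inter (Equiv.injective _), hτ,
    Set.image_singleton, Equiv.swap_apply_left]

end Perm

def Multiset.mapAddEquiv {α β : Type*} (e : α ≃ β) : Multiset α ≃+ Multiset β where
  __ := Multiset.mapAddMonoidHom e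
  invFun := Multiset.map e.symm
  left_inv s := by simp [Multiset.map_map]
  right_inv s := by simp [Multiset.map_map]

namespace PNat

noncomputable def factorMultisetMulEquiv : ℕ+ ≃* Multiplicative PrimeMultiset where
  __ := factorMultisetEquiv.trans Multiplicative.ofAdd
  map_mul' := factorMultiset_mul

noncomputable def mulEquivOfPerm (σ : Equiv.Perm Nat.Primes) : ℕ+ ≃* ℕ+ :=
  factorMultisetMulEquiv.trans <|
    (Multiset.mapAddEquiv σ).toMultiplicative.trans factorMultisetMulEquiv.symm

theorem factorMultiset_mulEquivOfPerm (σ : Equiv.Perm Nat.Primes) (n : ℕ+) :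
    (mulEquivOfPerm σ n).factorMultiset = Multiset.map σ n.factorMultiset :=
  PrimeMultiset.factorMultiset_prod (Multiset.map σ n.factorMultiset)

theorem coe_dvd_mulEquivOfPerm_iff (σ : Equiv.Perm Nat.Primes) (q : Nat.Primes) (n : ℕ+) :
    (q : ℕ+) ∣ mulEquivOfPerm σ n ↔ (σ.symm q : ℕ+) ∣ n := by
  rw [← PrimeMultiset.prod_ofPrime, ← PrimeMultiset.prod_ofPrime, PrimeMultiset.prod_dvd_iff',
    PrimeMultiset.prod_dvd_iff', factorMultiset_mulEquivOfPerm]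
  erw [Multiset.singleton_le, Multiset.singleton_le]
  conv_lhs => rw [← σ.apply_symm_apply q]
  exact Multiset.mem_map_of_injective σ.injective

end PNat

theorem sigma'_eq_image (n : ℕ+) : sigma' n = (↑) '' {q : Nat.Primes | (q : ℕ+) ∣ n} := by
  ext p
  constructor
  · rintro ⟨hp, hpn⟩
    exact ⟨⟨p, hp⟩, hpn, rfl⟩
  · rintro ⟨q, hqn, rfl⟩
    exact ⟨q.2, hqn⟩

theorem sigma'_mulEquivOfPerm (σ : Equiv.Perm Nat.Primes) (n : ℕ+) :
    sigma' (PNat.mulEquivOfPerm σ n) = (↑) '' (σ '' {q : Nat.Primes | (q : ℕ+) ∣ n}) := by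
  rw [sigma'_eq_image, σ.image_eq_preimage_symm]
  ext
  simp [PNat.coe_dvd_mulEquivOfPerm_iff]

/-- If `F ⊆ ℕ⁺` is `∅`-definable and contains an element other than `1`, then every prime
is the unique common prime divisor of two elements of `F`. -/
theorem prime_definable_over_two_elements (F : Set ℕ+)
    (hdef : ∃ φ : L.Formula (Fin 1), F = {a | φ.Realize (fun _ => a)})
    (hne : ∃ x ∈ F, x ≠ 1) :
    ∀ p : ℕ+, (p : ℕ).Prime →
      ∃ f₁ ∈ F, ∃ f₂ ∈ F, sigma' f₁ ∩ sigma' f₂ = {p} := by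
  obtain ⟨φ, rfl⟩ := hdef
  obtain ⟨x, hxF, hx1⟩ := hne
  intro p hp
  set S := {q : Nat.Primes | (q : ℕ+) ∣ x}
  have hS : S.Finite :=
    ((Set.finite_Iic x).preimage Nat.Primes.coe_pnat_injective.injOn).subset
      fun _ => PNat.le_of_dvd
  obtain ⟨q, hq, hqx⟩ := PNat.exists_prime_and_dvd hx1
  obtain ⟨σ₁, σ₂, hσ⟩ :=
    exists_perm_image_inter_image_eq_singleton hS (q := ⟨q, hq⟩) hqx (⟨p, hp⟩ : Nat.Primes)
  refine ⟨PNat.mulEquivOfPerm σ₁ x, (MulEquiv.realize_formula _ φ _).2 hxF,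
    PNat.mulEquivOfPerm σ₂ x, (MulEquiv.realize_formula _ φ _).2 hxF, ?_⟩
  rw [sigma'_mulEquivOfPerm, sigma'_mulEquivOfPerm,
    ← Set.image_inter Nat.Primes.coe_pnat_injective, hσ]
  exact Set.image_singleton
end

section
/- Let D ⊆ (ℕ⁺)ⁿ be definable over some tuple s̄ ∈ (ℕ⁺)^k all of whose components are squarefree. Then there exist m ∈ ℕ and a tuple r̄ = (r₁,…,r_m) ∈ (ℕ⁺)^m such that: (i) each rᵢ is squarefree; (ii) rᵢ and r_j are coprime for all i ≠ j; (iii) D is definable over r̄; and (iv) for every tuple c̄ over which D is definable, σ(r̄) ⊆ σ(c̄). -/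
open FirstOrder Language

/-- `r` is squarefree: no square of a prime divides it. -/
def Sqf (r : ℕ+) : Prop := ∀ p : ℕ+, (p : ℕ).Prime → ¬ p * p ∣ r

/-- The support of a tuple: the set of primes dividing some component. -/
def PSupp {n : ℕ} (a : Fin n → ℕ+) : Set ℕ := {p | p.Prime ∧ ∃ i, p ∣ (a i : ℕ)}

/-!
Among the tuples of a fixed length over which `D` is definable, pick one, `c₀`, with the fewest
prime divisors. Suppose a prime `p` divides an entry of `c₀` but no entry of another defining
tuple `c`, and write `c₀ᵢ = rᵢ * p ^ eᵢ` with `p ∤ rᵢ`, so that `D = {a | φ(a, r * p ^ e)}`.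
An automorphism of `(ℕ+, *)` that permutes the primes and fixes `c` preserves `D`. Swapping `p`
with a prime `x` dividing no entry of `c`, `r` or `a` thus gives `a ∈ D ↔ φ(a, r * x ^ e)`, and
swapping two such primes shows that the choice of `x` does not matter. Hence `D` is defined over
`r` by `∃ x prime, x ∤ a, x ∤ r, φ(a, r * x ^ e)`, against the minimality of `c₀`. So each prime
of `c₀` divides an entry of every defining tuple, and `D` is definable over the list of these
primes because each entry of `c₀` is a product of their powers.
-/

theorem FirstOrder.Language.Formula.realize_subst_sumElim {L' : Language} {M α ι β : Type*}
    [L'.Structure M] (φ : L'.Formula (α ⊕ ι)) (f : α → β) (t : ι → L'.Term β) (v : β → M) :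
    Formula.Realize (φ.subst (Sum.elim (var ∘ f) t)) v ↔
      φ.Realize (Sum.elim (v ∘ f) fun i => (t i).realize v) := by
  rw [Formula.Realize, BoundedFormula.realize_subst, Formula.Realize]
  refine iff_of_eq (congrArg₂ _ (funext fun x => ?_) rfl)
  cases x <;> rfl

namespace PNat

theorem prime_iff_forall_dvd {p : ℕ+} :
    p.Prime ↔ p ≠ 1 ∧ ∀ m : ℕ+, m ∣ p → m = 1 ∨ m = p := by
  refine ⟨fun hp => ⟨hp.ne_one, fun m => (dvd_prime hp).1⟩, fun ⟨hp1, hdvd⟩ => ?_⟩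
  refine Nat.prime_def.2 ⟨?_, fun m hm => ?_⟩
  · have : (p : ℕ) ≠ 1 := fun h => hp1 (PNat.coe_eq_one_iff.1 h)
    have := p.pos
    omega
  · rcases hdvd ⟨m, Nat.pos_of_dvd_of_pos hm p.pos⟩ (PNat.dvd_iff.2 hm) with h | h
    exacts [.inl (congrArg PNat.val h), .inr (congrArg PNat.val h)]

theorem exists_prime_forall_not_dvd {ι : Type*} [Finite ι] (f : ι → ℕ+) :
    ∃ p : Nat.Primes, ∀ i, ¬ (p : ℕ+) ∣ f i := by
  obtain ⟨N, hN⟩ := (Set.finite_range f).bddAbove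
  obtain ⟨p, hpN, hp⟩ := Nat.exists_infinite_primes (N + 1)
  refine ⟨⟨p, hp⟩, fun i hdvd => ?_⟩
  have h₁ : p ≤ f i := Nat.le_of_dvd (f i).pos (PNat.dvd_iff.1 hdvd)
  have h₂ : (f i : ℕ) ≤ N := hN (Set.mem_range_self i)
  omega

theorem exists_eq_mul_pow_and_not_dvd (n : ℕ+) (p : Nat.Primes) :
    ∃ (m : ℕ+) (e : ℕ), ¬ (p : ℕ+) ∣ m ∧ n = m * p ^ e := by
  obtain ⟨e, m, hpm, hn⟩ := Nat.exists_eq_pow_mul_and_not_dvd n.ne_zero p p.2.ne_one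
  have hm : 0 < m := Nat.pos_of_ne_zero (by rintro rfl; simp at hn)
  refine ⟨⟨m, hm⟩, e, fun h => hpm (PNat.dvd_iff.1 h), PNat.eq ?_⟩
  rw [hn, mul_comm]
  rfl

theorem one_le_count_factorMultiset_iff {p : Nat.Primes} {n : ℕ+} :
    1 ≤ n.factorMultiset.count p ↔ (p : ℕ+) ∣ n := by
  rw [← count_factorMultiset, pow_one]

theorem prod_pow_count_factorMultiset {n : ℕ+} {F : Finset Nat.Primes}
    (hF : ∀ q : Nat.Primes, (q : ℕ+) ∣ n → q ∈ F) :
    ∏ q ∈ F, (q : ℕ+) ^ n.factorMultiset.count q = n := by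
  have hsub : Multiset.toFinset n.factorMultiset ⊆ F := fun q hq =>
    hF q (one_le_count_factorMultiset_iff.1 (Multiset.one_le_count_iff_mem.2
      (Multiset.mem_toFinset.1 hq)))
  calc ∏ q ∈ F, (q : ℕ+) ^ n.factorMultiset.count q
      = ∏ q ∈ Multiset.toFinset n.factorMultiset, (q : ℕ+) ^ n.factorMultiset.count q :=
        (Finset.prod_subset hsub fun q _ hq => by
          rw [Multiset.count_eq_zero.2 (mt Multiset.mem_toFinset.2 hq), pow_zero]).symm
    _ = (Multiset.map (fun q : Nat.Primes => (q : ℕ+)) n.factorMultiset).prod :=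
        (Finset.prod_multiset_map_count _ _).symm
    _ = n := prod_factorMultiset n

def permPrimes (π : Equiv.Perm Nat.Primes) : ℕ+ ≃* ℕ+ where
  toFun n := PrimeMultiset.prod (n.factorMultiset.map π)
  invFun n := PrimeMultiset.prod (n.factorMultiset.map π.symm)
  left_inv n := by
    beta_reduce
    rw [PrimeMultiset.factorMultiset_prod (n.factorMultiset.map π),
      Multiset.map_map π.symm π n.factorMultiset, Equiv.symm_comp_self,
      Multiset.map_id n.factorMultiset]
    exact prod_factorMultiset n
  right_inv n := by
    beta_reduce
    rw [PrimeMultiset.factorMultiset_prod (n.factorMultiset.map π.symm),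
      Multiset.map_map π π.symm n.factorMultiset, Equiv.self_comp_symm,
      Multiset.map_id n.factorMultiset]
    exact prod_factorMultiset n
  map_mul' m n := by
    rw [factorMultiset_mul]
    exact (congrArg PrimeMultiset.prod (Multiset.map_add _ _ _)).trans (PrimeMultiset.prod_add _ _)

theorem permPrimes_apply_prime (π : Equiv.Perm Nat.Primes) (p : Nat.Primes) :
    permPrimes π p = π p := by
  change PrimeMultiset.prod (Multiset.map π (p : ℕ+).factorMultiset) = _
  rw [factorMultiset_ofPrime]
  exact PrimeMultiset.prod_ofPrime (π p)

theorem permPrimes_apply_eq_self {π : Equiv.Perm Nat.Primes} {n : ℕ+}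
    (h : ∀ q : Nat.Primes, (q : ℕ+) ∣ n → π q = q) : permPrimes π n = n := by
  change PrimeMultiset.prod (Multiset.map π n.factorMultiset) = n
  have hmap : Multiset.map π n.factorMultiset = n.factorMultiset :=
    (Multiset.map_congr rfl fun q hq =>
      h q (one_le_count_factorMultiset_iff.1 (Multiset.one_le_count_iff_mem.2 hq))).trans
      (Multiset.map_id' _)
  rw [hmap]
  exact prod_factorMultiset n

theorem permPrimes_swap_apply_eq_self {p q : Nat.Primes} {n : ℕ+} (hp : ¬ (p : ℕ+) ∣ n)
    (hq : ¬ (q : ℕ+) ∣ n) : permPrimes (Equiv.swap p q) n = n :=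
  permPrimes_apply_eq_self fun r hr =>
    Equiv.swap_apply_of_ne_of_ne (by rintro rfl; exact hp hr) (by rintro rfl; exact hq hr)

theorem permPrimes_swap_mul_pow {p q : Nat.Primes} {n : ℕ+} (hp : ¬ (p : ℕ+) ∣ n)
    (hq : ¬ (q : ℕ+) ∣ n) (e : ℕ) : permPrimes (Equiv.swap p q) (n * p ^ e) = n * q ^ e := by
  rw [map_mul, map_pow, permPrimes_swap_apply_eq_self hp hq, permPrimes_apply_prime,
    Equiv.swap_apply_left]

end PNat

theorem Nat.Primes.sqf (p : Nat.Primes) : Sqf p := fun q hq hqq =>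
  Nat.squarefree_iff_prime_squarefree.1 p.2.squarefree q hq (PNat.dvd_iff.1 hqq)

namespace SkolemArithmetic

variable {M N α β ι κ : Type*}

section Formulas

variable [Monoid M]

def mulTerm (t u : L.Term β) : L.Term β := Term.func (l := 2) () ![t, u]

def oneTerm : L.Term β := Term.func (l := 0) () ![]

@[simp] theorem realize_mulTerm (v : β → M) (t u : L.Term β) :
    (mulTerm t u).realize v = t.realize v * u.realize v := rfl

@[simp] theorem realize_oneTerm (v : β → M) : (oneTerm : L.Term β).realize v = 1 := rfl

def powTerm (t : L.Term β) : ℕ → L.Term β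
  | 0 => oneTerm
  | n + 1 => mulTerm (powTerm t n) t

@[simp] theorem realize_powTerm (v : β → M) (t : L.Term β) (n : ℕ) :
    (powTerm t n).realize v = t.realize v ^ n := by
  induction n with
  | zero => exact (pow_zero _).symm
  | succ n ih => rw [powTerm, realize_mulTerm, ih, pow_succ]

def prodTerm : {m : ℕ} → (Fin m → L.Term β) → L.Term β
  | 0, _ => oneTerm
  | _ + 1, t => mulTerm (t 0) (prodTerm (Fin.tail t))

@[simp] theorem realize_prodTerm [CommMonoid N] (v : β → N) {m : ℕ} (t : Fin m → L.Term β) :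
    (prodTerm t).realize v = ∏ i, (t i).realize v := by
  induction m with
  | zero => rfl
  | succ m ih => rw [prodTerm, realize_mulTerm, ih, Fin.prod_univ_succ]; rfl

noncomputable def dvdFormula (t u : L.Term β) : L.Formula β :=
  Formula.iExs Unit <|
    Term.equal (u.relabel Sum.inl) (mulTerm (t.relabel Sum.inl) (var (Sum.inr ())))

@[simp] theorem realize_dvdFormula (v : β → M) (t u : L.Term β) :
    (dvdFormula t u).Realize v ↔ t.realize v ∣ u.realize v := by
  simp only [dvdFormula, Formula.realize_iExs, Formula.realize_equal, Term.realize_relabel,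
    Sum.elim_comp_inl, realize_mulTerm, Term.realize_var, Sum.elim_inr, dvd_def]
  exact ⟨fun ⟨z, hz⟩ => ⟨z (), hz⟩, fun ⟨z, hz⟩ => ⟨fun _ => z, hz⟩⟩

noncomputable def primeFormula (t : L.Term β) : L.Formula β :=
  (Term.equal t oneTerm).not ⊓
    Formula.iAlls Unit ((dvdFormula (var (Sum.inr ())) (t.relabel Sum.inl)).imp
      (Term.equal (var (Sum.inr ())) oneTerm ⊔ Term.equal (var (Sum.inr ())) (t.relabel Sum.inl)))

@[simp] theorem realize_primeFormula (v : β → ℕ+) (t : L.Term β) :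
    (primeFormula t).Realize v ↔ (t.realize v).Prime := by
  rw [PNat.prime_iff_forall_dvd]
  simp only [primeFormula, Formula.realize_inf, Formula.realize_not, Formula.realize_equal,
    realize_oneTerm, Formula.realize_iAlls, Formula.realize_imp, realize_dvdFormula,
    Formula.realize_sup, Term.realize_var, Sum.elim_inr, Term.realize_relabel, Sum.elim_comp_inl]
  exact and_congr Iff.rfl ⟨fun h m => h fun _ => m, fun h m => h (m ())⟩

noncomputable def primeWitnessFormula [Finite α] [Finite ι] (φ : L.Formula (α ⊕ ι)) (e : ι → ℕ) :
    L.Formula (α ⊕ ι) :=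
  let x : L.Term ((α ⊕ ι) ⊕ Unit) := var (Sum.inr ())
  Formula.iExs Unit <|
    primeFormula x ⊓ Formula.iInf (fun v : α ⊕ ι => (dvdFormula x (var (Sum.inl v))).not) ⊓
      φ.subst (Sum.elim (var ∘ Sum.inl ∘ Sum.inl)
        fun i => mulTerm (var (Sum.inl (Sum.inr i))) (powTerm x (e i)))

theorem realize_primeWitnessFormula [Finite α] [Finite ι] (φ : L.Formula (α ⊕ ι)) (e : ι → ℕ)
    (a : α → ℕ+) (r : ι → ℕ+) :
    (primeWitnessFormula φ e).Realize (Sum.elim a r) ↔ ∃ x : Nat.Primes,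
      (∀ v, ¬ (x : ℕ+) ∣ Sum.elim a r v) ∧ φ.Realize (Sum.elim a fun i => r i * x ^ e i) := by
  simp only [primeWitnessFormula, Formula.realize_iExs, Formula.realize_inf,
    realize_primeFormula, Formula.realize_iInf, Formula.realize_not, realize_dvdFormula,
    Formula.realize_subst_sumElim, Term.realize_var, Sum.elim_inr, Sum.elim_inl, realize_mulTerm,
    realize_powTerm]
  simp only [← Function.comp_assoc, Sum.elim_comp_inl]
  constructor
  · rintro ⟨z, ⟨hz, hdvd⟩, hφ⟩
    exact ⟨⟨z (), hz⟩, hdvd, hφ⟩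
  · rintro ⟨x, hdvd, hφ⟩
    exact ⟨fun _ => x, ⟨x.2, hdvd⟩, hφ⟩

end Formulas

def _root_.MulEquiv.toLEquiv_s17 [Monoid M] [Monoid N] (e : M ≃* N) : L.Equiv M N where
  toEquiv := e.toEquiv
  map_fun' {n} f x := by
    match n, f with
    | 0, _ => exact map_one e
    | 2, _ => exact map_mul e _ _
  map_rel' r := r.elim

theorem realize_sumElim_comp_mulEquiv [Monoid M] [Monoid N] (e : M ≃* N)
    (φ : L.Formula (α ⊕ ι)) (a : α → M) (c : ι → M) :
    φ.Realize (Sum.elim (e ∘ a) (e ∘ c)) ↔ φ.Realize (Sum.elim a c) := by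
  rw [← Sum.comp_elim]
  exact StrongHomClass.realize_formula e.toLEquiv_s17 φ

def DefinableOver [Monoid M] (D : Set (α → M)) (c : ι → M) : Prop :=
  ∃ φ : L.Formula (α ⊕ ι), D = {a | φ.Realize (Sum.elim a c)}

def primeSupport [Fintype ι] (s : ι → ℕ+) : Finset Nat.Primes :=
  Finset.univ.biUnion fun i => Multiset.toFinset (s i).factorMultiset

theorem mem_primeSupport [Fintype ι] {s : ι → ℕ+} {p : Nat.Primes} :
    p ∈ primeSupport s ↔ ∃ i, (p : ℕ+) ∣ s i := by
  simp only [primeSupport, Finset.mem_biUnion, Finset.mem_univ, true_and]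
  exact exists_congr fun i => Multiset.mem_toFinset.trans
    (Multiset.one_le_count_iff_mem.symm.trans PNat.one_le_count_factorMultiset_iff)

theorem PSupp_subset_of_forall_mem_primeSupport {m l : ℕ} {q : Fin m → Nat.Primes}
    {c : Fin l → ℕ+} (h : ∀ j, q j ∈ primeSupport c) : PSupp (fun j => (q j : ℕ+)) ⊆ PSupp c := by
  rintro x ⟨hx, j, hxj⟩
  obtain ⟨i, hi⟩ := mem_primeSupport.1 (h j)
  exact ⟨hx, i, (Nat.prime_dvd_prime_iff_eq hx (q j).2).1 hxj ▸ PNat.dvd_iff.1 hi⟩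

namespace DefinableOver

open Finset

theorem of_eq_realize [Monoid M] {D : Set (α → M)} {c : ι → M} (hD : DefinableOver D c)
    {c' : κ → M} (t : ι → L.Term κ) (hc : ∀ i, c i = (t i).realize c') : DefinableOver D c' := by
  obtain ⟨φ, rfl⟩ := hD
  obtain rfl : c = fun i => (t i).realize c' := funext hc
  refine ⟨φ.subst (Sum.elim (var ∘ Sum.inl) fun i => (t i).relabel Sum.inr), ?_⟩
  ext a
  simp [Formula.realize_subst_sumElim, Term.realize_relabel]

theorem of_eq_prod_pow [CommMonoid M] {D : Set (α → M)} {c : ι → M} (hD : DefinableOver D c)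
    {m : ℕ} (r : Fin m → M) (E : ι → Fin m → ℕ) (hc : ∀ i, c i = ∏ j, r j ^ E i j) :
    DefinableOver D r :=
  hD.of_eq_realize (fun i => prodTerm fun j => powTerm (var j) (E i j)) (by simpa using hc)

theorem of_primeSupport_subset [Fintype ι] {D : Set (α → ℕ+)} {c : ι → ℕ+}
    (hD : DefinableOver D c) {F : Finset Nat.Primes} (hF : primeSupport c ⊆ F) :
    DefinableOver D fun j : Fin #F => (F.equivFin.symm j : ℕ+) := by
  refine hD.of_eq_prod_pow _
    (fun i j => (c i).factorMultiset.count (F.equivFin.symm j : Nat.Primes)) fun i => ?_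
  calc c i = ∏ p ∈ F, (p : ℕ+) ^ (c i).factorMultiset.count p :=
        (PNat.prod_pow_count_factorMultiset fun p hp => hF (mem_primeSupport.2 ⟨i, hp⟩)).symm
    _ = _ := by
        rw [← prod_coe_sort F]
        exact (F.equivFin.symm.prod_comp _).symm

theorem comp_mem_iff [Monoid M] {D : Set (α → M)} {c : ι → M} (hD : DefinableOver D c)
    (τ : M ≃* M) (hc : ∀ i, τ (c i) = c i) (a : α → M) : τ ∘ a ∈ D ↔ a ∈ D := by
  obtain ⟨φ, rfl⟩ := hD
  conv_lhs => rw [← show τ ∘ c = c from funext hc]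
  exact realize_sumElim_comp_mulEquiv τ φ a c

theorem of_mul_prime_pow [Finite α] [Finite ι] [Finite κ] {D : Set (α → ℕ+)}
    {r : ι → ℕ+} {c : κ → ℕ+} {p : Nat.Primes} {e : ι → ℕ}
    (hD : DefinableOver D fun i => r i * p ^ e i) (hr : ∀ i, ¬ (p : ℕ+) ∣ r i)
    (hc : DefinableOver D c) (hpc : ∀ j, ¬ (p : ℕ+) ∣ c j) : DefinableOver D r := by
  obtain ⟨φ, hφ⟩ := hD
  have mem_iff (y : Nat.Primes) (hyr : ∀ i, ¬ (y : ℕ+) ∣ r i) (hyc : ∀ j, ¬ (y : ℕ+) ∣ c j)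
      (b : α → ℕ+) : b ∈ D ↔ φ.Realize (Sum.elim b fun i => r i * y ^ e i) := by
    let τ := PNat.permPrimes (Equiv.swap y p)
    have hτ : τ ∘ (fun i => r i * y ^ e i) = fun i => r i * p ^ e i :=
      funext fun i => PNat.permPrimes_swap_mul_pow (hyr i) (hr i) (e i)
    rw [← hc.comp_mem_iff τ fun j => PNat.permPrimes_swap_apply_eq_self (hyc j) (hpc j), hφ,
      Set.mem_ofPred_eq, ← hτ, realize_sumElim_comp_mulEquiv]
  refine ⟨primeWitnessFormula φ e, Set.ext fun a => ?_⟩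
  obtain ⟨y, hy⟩ := PNat.exists_prime_forall_not_dvd (Sum.elim (Sum.elim a r) c)
  have hya (v : α ⊕ ι) : ¬ (y : ℕ+) ∣ Sum.elim a r v := hy (Sum.inl v)
  rw [Set.mem_ofPred_eq, realize_primeWitnessFormula,
    mem_iff y (fun i => hya (Sum.inr i)) (fun j => hy (Sum.inr j))]
  refine ⟨fun h => ⟨y, hya, h⟩, fun ⟨x, hxa, hx⟩ => ?_⟩
  let τ := PNat.permPrimes (Equiv.swap x y)
  have hτa : τ ∘ a = a :=
    funext fun j => PNat.permPrimes_swap_apply_eq_self (hxa (Sum.inl j)) (hya (Sum.inl j))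
  have hτr : τ ∘ (fun i => r i * x ^ e i) = fun i => r i * y ^ e i :=
    funext fun i => PNat.permPrimes_swap_mul_pow (hxa (Sum.inr i)) (hya (Sum.inr i)) (e i)
  rwa [← hτa, ← hτr, realize_sumElim_comp_mulEquiv]

theorem primeSupport_subset [Finite α] [Fintype ι] [Fintype κ] {D : Set (α → ℕ+)}
    {c₀ : ι → ℕ+} (h₀ : DefinableOver D c₀)
    (hmin : ∀ c : ι → ℕ+, DefinableOver D c → #(primeSupport c₀) ≤ #(primeSupport c))
    {c : κ → ℕ+} (hc : DefinableOver D c) : primeSupport c₀ ⊆ primeSupport c := by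
  intro p hp
  by_contra hpc
  rw [mem_primeSupport, not_exists] at hpc
  choose m e hpm hm using fun i => PNat.exists_eq_mul_pow_and_not_dvd (c₀ i) p
  obtain rfl : c₀ = fun i => m i * p ^ e i := funext hm
  have hsub : primeSupport m ⊆ primeSupport fun i => m i * p ^ e i := fun q hq =>
    have ⟨i, hqi⟩ := mem_primeSupport.1 hq
    mem_primeSupport.2 ⟨i, hqi.mul_right _⟩
  have hp' : p ∉ primeSupport m := fun h =>
    have ⟨i, hpi⟩ := mem_primeSupport.1 h
    hpm i hpi
  exact (hmin m (h₀.of_mul_prime_pow hpm hc hpc)).not_gt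
    (card_lt_card ((ssubset_iff_of_subset hsub).2 ⟨p, hp, hp'⟩))

end DefinableOver

end SkolemArithmetic

open SkolemArithmetic

theorem definable_over_coprime_radicals_general (n k : ℕ) (D : Set (Fin n → ℕ+))
    (s : Fin k → ℕ+)
    (hdef : ∃ φ : L.Formula (Fin n ⊕ Fin k), D = {a | φ.Realize (Sum.elim a s)}) :
    ∃ (m : ℕ) (r : Fin m → ℕ+),
      (∀ i, Sqf (r i)) ∧
      (∀ i j, i ≠ j → Nat.Coprime (r i : ℕ) (r j : ℕ)) ∧
      (∃ ψ : L.Formula (Fin n ⊕ Fin m), D = {a | ψ.Realize (Sum.elim a r)}) ∧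
      (∀ (l : ℕ) (c : Fin l → ℕ+) (χ : L.Formula (Fin n ⊕ Fin l)),
        D = {a | χ.Realize (Sum.elim a c)} → PSupp r ⊆ PSupp c) := by
  let size (c : Fin k → ℕ+) := (primeSupport c).card
  obtain ⟨c₀, hc₀, hmin⟩ : ∃ c₀, DefinableOver D c₀ ∧ ∀ c, DefinableOver D c → size c₀ ≤ size c :=
    ⟨_, Function.argminOn_mem size {c | DefinableOver D c} ⟨s, hdef⟩,
      fun _ hc => Function.argminOn_le size {c | DefinableOver D c} hc⟩
  set F := primeSupport c₀
  let q (j : Fin F.card) : Nat.Primes := F.equivFin.symm j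
  have hq : Function.Injective q := Subtype.val_injective.comp F.equivFin.symm.injective
  refine ⟨F.card, fun j => q j, fun j => (q j).sqf, fun i j hij => ?_,
    hc₀.of_primeSupport_subset subset_rfl, fun l c χ hχ => ?_⟩
  · exact (Nat.coprime_primes (q i).2 (q j).2).2 fun h => hij (hq (Subtype.ext h))
  · exact PSupp_subset_of_forall_mem_primeSupport fun j =>
      hc₀.primeSupport_subset hmin ⟨χ, hχ⟩ (F.equivFin.symm j).2

/-- A set definable over a squarefree tuple is definable over a tuple of pairwise coprime
squarefree elements whose support is least among supports of defining tuples. -/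
theorem definable_over_coprime_radicals (n k : ℕ) (D : Set (Fin n → ℕ+))
    (s : Fin k → ℕ+) (hs : ∀ i, Sqf (s i))
    (hdef : ∃ φ : L.Formula (Fin n ⊕ Fin k), D = {a | φ.Realize (Sum.elim a s)}) :
    ∃ (m : ℕ) (r : Fin m → ℕ+),
      (∀ i, Sqf (r i)) ∧
      (∀ i j, i ≠ j → Nat.Coprime (r i : ℕ) (r j : ℕ)) ∧
      (∃ ψ : L.Formula (Fin n ⊕ Fin m), D = {a | ψ.Realize (Sum.elim a r)}) ∧
      (∀ (l : ℕ) (c : Fin l → ℕ+) (χ : L.Formula (Fin n ⊕ Fin l)),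
        D = {a | χ.Realize (Sum.elim a c)} → PSupp r ⊆ PSupp c) :=
  definable_over_coprime_radicals_general n k D s hdef
end
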